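/- Let g : E → ℤ/4ℤ be an H-form on a finite-dimensional ℤ/2-vector space E with associated bilinear form C. If dim E ≥ 9, then the group O(E,g) of g-preserving linear maps is generated by the elements T_a with a ∈ E and g(a) = 2 alone. -/
import Mathlib


/-- The transvection `T_a : x ↦ x + C(x,a)·a`, as an endomorphism. -/
def TmapEnd {E : Type*} [AddCommGroup E] [Module (ZMod 2) E]
    (C : E →ₗ[ZMod 2] E →ₗ[ZMod 2] ZMod 2) (a : E) : Module.End (ZMod 2) E :=
  LinearMap.id + (C.flip a).smulRight a

namespace St9

lemma z2cases (s : ZMod 2) : s = 0 ∨ s = 1 := by revert s; decide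
lemma d1 (s : ZMod 2) (h : (2:ZMod 4) * (s.val : ZMod 4) = 0) : s = 0 := by revert s; decide
lemma d2 (s t : ZMod 2) (h : (2:ZMod 4) * (s.val : ZMod 4) = 2 * (t.val : ZMod 4)) : s = t := by
  revert s t; decide
lemma d3 (p : ZMod 4) (s : ZMod 2) (h : p + 2 * (s.val : ZMod 4) = 0) (hp : p ≠ 2) :
    p = 0 ∧ s = 0 := by revert s; revert p; decide
lemma val_one_cast : (((1 : ZMod 2).val : ZMod 4)) = 1 := by decide
lemma d4 (p q : ZMod 4) (h : q = 0 + p + 2 * 1) (h1 : p ≠ 2) (h2 : q ≠ 2) :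
    p = 1 ∨ p = 3 := by revert p q; decide
lemma d5 (p q r : ZMod 4) (s : ZMod 2) (hp : p = 1 ∨ p = 3) (hq : q = 1 ∨ q = 3)
    (h : q = p + r + 2 * (s.val : ZMod 4)) (hr : r ≠ 2) : r = 0 := by
  revert p q r s; decide
lemma d6 (p q r : ZMod 4) (s : ZMod 2) (hp : p = 1 ∨ p = 3) (hq : q = 1 ∨ q = 3)
    (h : r = p + q + 2 * (s.val : ZMod 4)) (hr : r ≠ 2) : r = 0 := by
  revert p q r s; decide
lemma d7 (p : ZMod 4) (h : p ≠ 2) : p = 0 ∨ p = 1 ∨ p = 3 := by revert p; decide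
lemma p_ne_p_add_two (p : ZMod 4) : p ≠ p + 2 := by revert p; decide
lemma z2add (s : ZMod 2) : s + s = 0 := by revert s; decide

variable {E : Type*} [AddCommGroup E] [Module (ZMod 2) E]

lemma add_self (x : E) : x + x = 0 := by
  have : ((2 : ZMod 2)) • x = x + x := two_smul _ x
  rw [show (2 : ZMod 2) = 0 by decide, zero_smul] at this
  exact this.symm

lemma neg_eq_self (x : E) : -x = x := by
  rw [neg_eq_iff_add_eq_zero, add_self]

variable (C : E →ₗ[ZMod 2] E →ₗ[ZMod 2] ZMod 2) (g : E → ZMod 4)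

lemma Tmap_apply (a x : E) : TmapEnd C a x = x + C x a • a := by
  simp [TmapEnd]

section
variable (hadd : ∀ x y : E, g (x + y) = g x + g y + 2 * ((C x y).val : ZMod 4))
include hadd

lemma g_zero : g 0 = 0 := by simpa using hadd 0 0

lemma g_even {x : E} (h : g x = 0 ∨ g x = 2) : C x x = 0 := by
  have h0 := hadd x x
  rw [add_self, g_zero C g hadd] at h0
  apply d1
  rcases h with h | h <;> rw [h] at h0
  · rw [zero_add, zero_add] at h0; exact h0.symm
  · rw [show (2:ZMod 4) + 2 = 0 from by decide, zero_add] at h0; exact h0.symm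


lemma Tmap_mem_O {a : E} (ha : g a = 2) (x : E) : g (TmapEnd C a x) = g x := by
  rw [Tmap_apply]
  rcases z2cases (C x a) with h | h <;> rw [h]
  · simp
  · rw [one_smul (ZMod 2) a, hadd x a, ha, h, val_one_cast]
    rw [show ∀ p : ZMod 4, p + 2 + 2 * 1 = p from by decide]

omit hadd in
lemma CTmap (a x y : E) (hay : C a y = 0) : C (TmapEnd C a x) y = C x y := by
  rw [Tmap_apply]
  rcases z2cases (C x a) with h | h <;> rw [h]
  · simp
  · rw [one_smul (ZMod 2) a, map_add, LinearMap.add_apply, hay, add_zero]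

lemma Tmap_invol {a : E} (ha : g a = 2) : TmapEnd C a * TmapEnd C a = 1 := by
  have hca : C a a = 0 := g_even C g hadd (Or.inr ha)
  ext x
  rw [Module.End.mul_apply, Module.End.one_apply, Tmap_apply, Tmap_apply,
    map_add, LinearMap.add_apply, LinearMap.map_smul, LinearMap.smul_apply, hca,
    smul_zero, add_zero, add_assoc, ← add_smul]
  rw [z2add, zero_smul, add_zero]

lemma O_C {T : Module.End (ZMod 2) E} (hT : ∀ x, g (T x) = g x) (x y : E) :
    C (T x) (T y) = C x y := by
  have h := hadd (T x) (T y)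
  rw [← map_add, hT, hT, hT, hadd x y] at h
  rw [add_assoc, add_assoc] at h
  have h2 : 2 * (((C x y).val : ZMod 4)) = 2 * (((C (T x) (T y)).val : ZMod 4)) :=
    add_left_cancel (add_left_cancel h)
  exact d2 _ _ h2.symm

lemma O_inj (hnd : ∀ x : E, (∀ y : E, C x y = 0) → x = 0)
    {T : Module.End (ZMod 2) E} (hT : ∀ x, g (T x) = g x) :
    Function.Injective T := by
  rw [← LinearMap.ker_eq_bot, eq_bot_iff]
  intro x hx
  rw [LinearMap.mem_ker] at hx
  have hx0 : x = 0 := by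
    apply hnd
    intro y
    rw [← O_C C g hadd hT x y, hx]
    simp
  simp [hx0]

lemma O_surj [FiniteDimensional (ZMod 2) E] (hnd : ∀ x : E, (∀ y : E, C x y = 0) → x = 0)
    {T : Module.End (ZMod 2) E} (hT : ∀ x, g (T x) = g x) :
    Function.Surjective T :=
  (LinearMap.injective_iff_surjective).mp (O_inj C g hadd hnd hT)

section
variable [FiniteDimensional (ZMod 2) E]
open Module Submodule

omit hadd in
lemma isotropic_le (hnd : ∀ x : E, (∀ y : E, C x y = 0) → x = 0)
    (Z : Submodule (ZMod 2) E) (hZ : ∀ x ∈ Z, ∀ y ∈ Z, C x y = 0) :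
    2 * finrank (ZMod 2) Z ≤ finrank (ZMod 2) E := by
  classical
  have hinj : Function.Injective (C : E →ₗ[ZMod 2] Module.Dual (ZMod 2) E) := by
    rw [← LinearMap.ker_eq_bot, eq_bot_iff]
    intro x hx
    rw [LinearMap.mem_ker] at hx
    have hx0 : x = 0 := hnd x (fun y => by rw [show C x = 0 from hx]; rfl)
    simp [hx0]
  set Zp := LinearMap.ker (C.compl₂ Z.subtype) with hZpdef
  have hZZp : Z ≤ Zp := by
    intro z hz
    rw [hZpdef, LinearMap.mem_ker]
    ext y
    exact hZ z hz y y.2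
  have hmap : Submodule.map (C : E →ₗ[ZMod 2] Module.Dual (ZMod 2) E) Zp ≤ Z.dualAnnihilator := by
    rintro φ ⟨x, hx, rfl⟩
    rw [Submodule.mem_dualAnnihilator]
    intro w hw
    have hx' : (C.compl₂ Z.subtype) x = 0 := hx
    calc C x w = (C.compl₂ Z.subtype) x ⟨w, hw⟩ := rfl
    _ = (0 : Z →ₗ[ZMod 2] ZMod 2) ⟨w, hw⟩ := by rw [hx']
    _ = 0 := rfl
  have e1 : finrank (ZMod 2) Zp
      = finrank (ZMod 2) (Submodule.map (C : E →ₗ[ZMod 2] Module.Dual (ZMod 2) E) Zp) :=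
    LinearEquiv.finrank_eq (Submodule.equivMapOfInjective _ hinj Zp)
  have e2 : finrank (ZMod 2) (Z.dualAnnihilator) = finrank (ZMod 2) (E ⧸ Z) :=
    (LinearEquiv.finrank_eq (Subspace.quotEquivAnnihilator Z)).symm
  have e3 : finrank (ZMod 2) (E ⧸ Z) + finrank (ZMod 2) Z = finrank (ZMod 2) E :=
    Submodule.finrank_quotient_add_finrank Z
  have l1 : finrank (ZMod 2) Z ≤ finrank (ZMod 2) Zp := Submodule.finrank_mono hZZp
  have l2 : finrank (ZMod 2) (Submodule.map (C : E →ₗ[ZMod 2] Module.Dual (ZMod 2) E) Zp)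
      ≤ finrank (ZMod 2) Z.dualAnnihilator := Submodule.finrank_mono hmap
  omega


lemma exists_c (hsymm : ∀ x y : E, C x y = C y x)
    (hnd : ∀ x : E, (∀ y : E, C x y = 0) → x = 0)
    (hdim : 9 ≤ finrank (ZMod 2) E) (a b : E) :
    ∃ c : E, C c a = 0 ∧ C c b = 0 ∧ g c = 2 := by
  classical
  by_contra hno
  push_neg at hno
  set U : Submodule (ZMod 2) E := LinearMap.ker (C.flip a) ⊓ LinearMap.ker (C.flip b) with hUdef
  have memU : ∀ x : E, x ∈ U ↔ (C x a = 0 ∧ C x b = 0) := by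
    intro x
    rw [hUdef, Submodule.mem_inf, LinearMap.mem_ker, LinearMap.mem_ker,
      LinearMap.flip_apply, LinearMap.flip_apply]
  have no2 : ∀ c ∈ U, g c ≠ 2 := by
    intro c hc
    rw [memU] at hc
    exact hno c hc.1 hc.2
  -- dimension of U
  have kerdim : ∀ φ : E →ₗ[ZMod 2] ZMod 2,
      finrank (ZMod 2) E ≤ finrank (ZMod 2) (LinearMap.ker φ) + 1 := by
    intro φ
    have h1 := LinearMap.finrank_range_add_finrank_ker φ
    have h2 : finrank (ZMod 2) (LinearMap.range φ) ≤ 1 := by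
      have := Submodule.finrank_le (LinearMap.range φ)
      rwa [Module.finrank_self] at this
    omega
  have hdimU : finrank (ZMod 2) E ≤ finrank (ZMod 2) U + 2 := by
    have h1 := kerdim (C.flip a)
    have h2 := kerdim (C.flip b)
    have h3 := Submodule.finrank_sup_add_finrank_inf_eq
      (LinearMap.ker (C.flip a)) (LinearMap.ker (C.flip b))
    have h4 := Submodule.finrank_le (LinearMap.ker (C.flip a) ⊔ LinearMap.ker (C.flip b))
    rw [hUdef]
    omega
  by_cases hA : ∃ x, x ∈ U ∧ g x = 0 ∧ ∃ y, y ∈ U ∧ C x y ≠ 0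
  · obtain ⟨x, hxU, hgx, y, hyU, hxy⟩ := hA
    have hxy1 : C x y = 1 := (z2cases _).resolve_left hxy
    have hodd1 : ∀ w ∈ U, C x w = 1 → (g w = 1 ∨ g w = 3) := by
      intro w hw hcw
      have h := hadd x w
      rw [hgx, hcw, val_one_cast] at h
      exact d4 _ _ h (no2 w hw) (no2 _ (U.add_mem hxU hw))
    have hzero : ∀ z ∈ U, C x z = 0 → g z = 0 := by
      intro z hz hcz
      have hyz : C x (y + z) = 1 := by rw [map_add, hxy1, hcz, add_zero]
      have h1 := hodd1 y hyU hxy1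
      have h2 := hodd1 (y + z) (U.add_mem hyU hz) hyz
      exact d5 _ _ _ _ h1 h2 (hadd y z) (no2 z hz)
    set Z : Submodule (ZMod 2) E := U ⊓ LinearMap.ker (C x) with hZdef
    have memZ : ∀ z : E, z ∈ Z ↔ (z ∈ U ∧ C x z = 0) := by
      intro z; rw [hZdef, Submodule.mem_inf, LinearMap.mem_ker]
    have hZiso : ∀ z ∈ Z, ∀ z' ∈ Z, C z z' = 0 := by
      intro z hz z' hz'
      rw [memZ] at hz hz'
      have g1 : g z = 0 := hzero z hz.1 hz.2
      have g2 : g z' = 0 := hzero z' hz'.1 hz'.2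
      have g3 : g (z + z') = 0 := by
        apply hzero _ (U.add_mem hz.1 hz'.1)
        rw [map_add, hz.2, hz'.2, add_zero]
      have h := hadd z z'
      rw [g1, g2, g3, zero_add, zero_add] at h
      exact d1 _ h.symm
    have hb := isotropic_le C hnd Z hZiso
    have hdimZ : finrank (ZMod 2) E ≤ finrank (ZMod 2) Z + 3 := by
      have h1 := kerdim (C x)
      have h3 := Submodule.finrank_sup_add_finrank_inf_eq U (LinearMap.ker (C x))
      have h4 := Submodule.finrank_le (U ⊔ LinearMap.ker (C x))
      rw [hZdef]
      omega
    omega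
  · push_neg at hA
    set R : Submodule (ZMod 2) E := U ⊓ LinearMap.ker (C.compl₂ U.subtype) with hRdef
    have memR : ∀ x : E, x ∈ R ↔ (x ∈ U ∧ ∀ u ∈ U, C x u = 0) := by
      intro x
      rw [hRdef, Submodule.mem_inf, LinearMap.mem_ker]
      constructor
      · rintro ⟨h1, h2⟩
        refine ⟨h1, fun u hu => ?_⟩
        calc C x u = (C.compl₂ U.subtype) x ⟨u, hu⟩ := rfl
        _ = (0 : U →ₗ[ZMod 2] ZMod 2) ⟨u, hu⟩ := by rw [h2]
        _ = 0 := rfl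
      · rintro ⟨h1, h2⟩
        refine ⟨h1, ?_⟩
        ext u
        exact h2 u u.2
    have hevens : ∀ x ∈ U, g x = 0 → x ∈ R := by
      intro x hx hgx
      rw [memR]
      exact ⟨hx, fun u hu => hA x hx hgx u hu⟩
    have hRiso : ∀ x ∈ R, ∀ y ∈ R, C x y = 0 := by
      intro x hx y hy
      rw [memR] at hx hy
      exact hx.2 y hy.1
    have hb := isotropic_le C hnd R hRiso
    by_cases hO : ∃ x₀, x₀ ∈ U ∧ g x₀ ≠ 0
    · obtain ⟨x₀, hx₀U, hgx₀⟩ := hO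
      have hx₀odd : g x₀ = 1 ∨ g x₀ = 3 := (d7 _ (no2 _ hx₀U)).resolve_left hgx₀
      have hx₀ne : x₀ ≠ 0 := fun h => hgx₀ (h ▸ g_zero C g hadd)
      have hUle : U ≤ R ⊔ Submodule.span (ZMod 2) {x₀} := by
        intro u hu
        rcases d7 _ (no2 u hu) with h0 | hodd
        · exact Submodule.mem_sup_left (hevens u hu h0)
        · have hsum : g (u + x₀) = 0 := by
            apply d6 _ _ _ (C u x₀) hodd hx₀odd (hadd u x₀)
            exact no2 _ (U.add_mem hu hx₀U)
          have h1 : u + x₀ ∈ R := hevens _ (U.add_mem hu hx₀U) hsum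
          have : u = (u + x₀) + x₀ := by rw [add_assoc, add_self, add_zero]
          rw [this]
          exact Submodule.add_mem _ (Submodule.mem_sup_left h1)
            (Submodule.mem_sup_right (Submodule.mem_span_singleton_self x₀))
      have h1 : finrank (ZMod 2) U ≤ finrank (ZMod 2) R + 1 := by
        have h2 := Submodule.finrank_mono hUle
        have h3 := Submodule.finrank_sup_add_finrank_inf_eq R (Submodule.span (ZMod 2) {x₀})
        have h4 := finrank_span_singleton (K := ZMod 2) hx₀ne
        omega
      omega
    · push_neg at hO
      have hUle : U ≤ R := fun u hu => hevens u hu (hO u hu)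
      have := Submodule.finrank_mono hUle
      omega

omit hadd in
lemma nsmul2 (y : E) : (2 : ℕ) • y = 0 := by rw [two_nsmul]; exact add_self y
omit hadd in
lemma zsmul2 (y : E) : (2 : ℤ) • y = 0 := by rw [two_zsmul]; exact add_self y
omit hadd in
lemma nsmul4 (y : E) : (4 : ℕ) • y = 0 := by
  rw [show (4:ℕ) = 2 + 2 from rfl, add_nsmul, nsmul2, add_zero]
omit hadd in
lemma zsmul4 (y : E) : (4 : ℤ) • y = 0 := by
  rw [show (4:ℤ) = 2 + 2 from rfl, add_zsmul, zsmul2, add_zero]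

lemma quadS_apply (a b c : E)
    (ga : g a = 0) (gb : g b = 0) (gc : g c = 2)
    (hab : C a b = 0) (hba : C b a = 0)
    (hac : C a c = 0) (hca : C c a = 0)
    (hbc : C b c = 0) (hcb : C c b = 0) (x : E) :
    (TmapEnd C (a+c) * (TmapEnd C (b+c) * (TmapEnd C (a+b+c) * TmapEnd C c))) x
      = x + C x b • a + C x a • b := by
  have caa : C a a = 0 := g_even C g hadd (Or.inl ga)
  have cbb : C b b = 0 := g_even C g hadd (Or.inl gb)
  have ccc : C c c = 0 := g_even C g hadd (Or.inr gc)
  have hcw3 : C c (a + b + c) = 0 := by simp [map_add, hca, hcb, ccc]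
  have hcw2 : C c (b + c) = 0 := by simp [map_add, hcb, ccc]
  have hcw1 : C c (a + c) = 0 := by simp [map_add, hca, ccc]
  have hw3w2 : C (a + b + c) (b + c) = 0 := by
    simp [map_add, LinearMap.add_apply, hab, hac, cbb, hbc, hcb, ccc]
  have hw3w1 : C (a + b + c) (a + c) = 0 := by
    simp [map_add, LinearMap.add_apply, caa, hac, hba, hbc, hca, ccc]
  have hw2w1 : C (b + c) (a + c) = 0 := by
    simp [map_add, LinearMap.add_apply, hba, hbc, hca, ccc]
  rw [Module.End.mul_apply, Module.End.mul_apply, Module.End.mul_apply]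
  rw [Tmap_apply C (a+b+c) (TmapEnd C c x), CTmap C c _ _ hcw3]
  rw [Tmap_apply C c x]
  set y1 := x + C x c • c with hy1
  set y2 := y1 + C x (a+b+c) • (a+b+c) with hy2
  have e2 : C y2 (b+c) = C x (b+c) := by
    simp [hy2, hy1, map_add, LinearMap.add_apply, LinearMap.map_smul, LinearMap.smul_apply,
      smul_zero, hab, hba, hac, hca, hbc, hcb, caa, cbb, ccc]
  rw [Tmap_apply C (b+c) y2, e2]
  set y3 := y2 + C x (b+c) • (b+c) with hy3
  have e3 : C y3 (a+c) = C x (a+c) := by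
    simp [hy3, hy2, hy1, map_add, LinearMap.add_apply, LinearMap.map_smul, LinearMap.smul_apply,
      smul_zero, hab, hba, hac, hca, hbc, hcb, caa, cbb, ccc]
  rw [Tmap_apply C (a+c) y3, e3, hy3, hy2, hy1]
  have exp1 : C x (a + b + c) = C x a + C x b + C x c := by simp [map_add]
  have exp2 : C x (b + c) = C x b + C x c := by simp [map_add]
  have exp3 : C x (a + c) = C x a + C x c := by simp [map_add]
  rw [exp1, exp2, exp3]
  rcases z2cases (C x a) with h1 | h1 <;> rcases z2cases (C x b) with h2 | h2 <;>
    rcases z2cases (C x c) with h3 | h3 <;>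
    rw [h1, h2, h3] <;>
    simp only [zero_add, add_zero, show (1:ZMod 2)+1 = 0 from by decide,
      zero_smul, one_smul, smul_add] <;>
    abel_nf <;>
    simp [nsmul2, zsmul2, nsmul4, zsmul4]

omit hadd in
lemma eq_of_add_eq_zero' {x y : E} (h : x + y = 0) : x = y := by
  have : x = x + (y + y) := by rw [add_self, add_zero]
  rw [this, ← add_assoc, h, zero_add]

/-- The key step lemma. -/
lemma step (hsymm : ∀ x y : E, C x y = C y x)
    (hnd : ∀ x : E, (∀ y : E, C x y = 0) → x = 0)
    (hdim : 9 ≤ finrank (ZMod 2) E)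
    {T : Module.End (ZMod 2) E} (hT : ∀ x, g (T x) = g x) (hTne : T ≠ 1) :
    ∃ S : Module.End (ZMod 2) E,
      S ∈ Submonoid.closure {T | ∃ a : E, g a = 2 ∧ T = TmapEnd C a} ∧
      S * S = 1 ∧
      ∃ v : E, T v ≠ v ∧ S (T v) = v ∧ ∀ f : E, T f = f → S f = f := by
  classical
  set Gen : Set (Module.End (ZMod 2) E) := {T | ∃ a : E, g a = 2 ∧ T = TmapEnd C a} with hGen
  by_cases hgood : ∃ w, g (T w + w) = 2
  · obtain ⟨w, hw⟩ := hgood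
    set a := T w + w with hadef
    have hvne : T w ≠ w := by
      intro h
      rw [hadef] at hw
      rw [h, add_self, g_zero C g hadd] at hw
      exact (by decide : (0:ZMod 4) ≠ 2) hw
    have hwa : T w + a = w := by rw [hadef, ← add_assoc, add_self, zero_add]
    have hCwa : C (T w) a = 1 := by
      rcases z2cases (C (T w) a) with h | h
      · exfalso
        have h2 := hadd (T w) a
        rw [h, hwa, hT w, hw] at h2
        simp only [ZMod.val_zero, Nat.cast_zero, mul_zero, add_zero] at h2
        exact p_ne_p_add_two (g w) h2
      · exact h
    refine ⟨TmapEnd C a, Submonoid.subset_closure ⟨a, hw, rfl⟩,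
      Tmap_invol C g hadd hw, w, hvne, ?_, ?_⟩
    · rw [Tmap_apply, hCwa, one_smul, hwa]
    · intro f hf
      have hCfa : C f a = 0 := by
        rw [hadef, map_add]
        have : C f (T w) = C f w := by
          conv_lhs => rw [← hf]
          exact O_C C g hadd hT f w
        rw [this, z2add]
      rw [Tmap_apply, hCfa, zero_smul, add_zero]
  · push_neg at hgood
    have hK0 : ∀ w : E, g (T w + w) = 0 ∧ C w (T w + w) = 0 := by
      intro w
      have h := hadd w (T w + w)
      have hrw : w + (T w + w) = T w := by
        rw [add_comm (T w) w, ← add_assoc, add_self, zero_add]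
      rw [hrw, hT w] at h
      have h2 : g (T w + w) + 2 * (((C w (T w + w)).val : ZMod 4)) = 0 := by
        rw [add_assoc] at h
        have := add_left_cancel (a := g w) (b := g (T w + w) + 2 * (((C w (T w + w)).val : ZMod 4))) (c := 0)
        apply this
        rw [add_zero, ← h]
      exact d3 _ _ h2 (hgood _)
    have hKiso : ∀ w z : E, C (T w + w) (T z + z) = 0 := by
      intro w z
      have hsum : (T w + w) + (T z + z) = T (w + z) + (w + z) := by
        rw [map_add]; abel
      have h := hadd (T w + w) (T z + z)
      rw [hsum, (hK0 (w+z)).1, (hK0 w).1, (hK0 z).1, zero_add, zero_add] at h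
      exact d1 _ h.symm
    have hsurj : Function.Surjective T := O_surj C g hadd hnd hT
    have hKfix : ∀ w : E, T (T w + w) = T w + w := by
      intro w
      apply eq_of_add_eq_zero'
      apply hnd
      intro y
      obtain ⟨z, rfl⟩ := hsurj y
      have e1 : C (T (T w + w) + (T w + w)) (T z) = C (T w + w) (T z + z) := by
        rw [map_add C (T (T w + w)) (T w + w), LinearMap.add_apply,
          O_C C g hadd hT (T w + w) z, map_add (C (T w + w)) (T z) z, add_comm]
      rw [e1, hKiso]
    obtain ⟨v, hv⟩ : ∃ v, T v ≠ v := by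
      by_contra hall
      push_neg at hall
      exact hTne (by ext x; rw [Module.End.one_apply]; exact hall x)
    set a := T v + v with hadef
    have ha0 : a ≠ 0 := fun h => hv (eq_of_add_eq_zero' (hadef ▸ h))
    have hva : T v + a = v := by rw [hadef, ← add_assoc, add_self, zero_add]
    have hCva : C (T v) a = 0 := by
      have hTv : T v = a + v := by rw [hadef, add_assoc, add_self, add_zero]
      rw [hTv, map_add C a v, LinearMap.add_apply, hKiso v v, (hK0 v).2, add_zero]
    have hbex : ∃ z, C (T v) (T z + z) ≠ 0 := by
      by_contra hall
      push_neg at hall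
      have hfix : T (T v) = T v := by
        apply eq_of_add_eq_zero'
        apply hnd
        intro y
        obtain ⟨z, rfl⟩ := hsurj y
        have e1 : C (T (T v) + T v) (T z) = C (T v) (T z + z) := by
          rw [map_add C (T (T v)) (T v), LinearMap.add_apply,
            O_C C g hadd hT (T v) z, map_add (C (T v)) (T z) z]
          exact add_comm _ _
        rw [e1, hall]
      have hTa : T a = a := by rw [hadef]; exact hKfix v
      have h3 : T v = T v + a := by
        conv_lhs => rw [← hva]
        rw [map_add, hfix, hTa]
      have h4 : (0 : E) = a := add_left_cancel (by rw [add_zero]; exact h3)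
      exact ha0 h4.symm
    obtain ⟨z₀, hz₀⟩ := hbex
    set b := T z₀ + z₀ with hbdef
    have hub : C (T v) b = 1 := (z2cases _).resolve_left hz₀
    have ga : g a = 0 := (hK0 v).1
    have gb : g b = 0 := (hK0 z₀).1
    have hab' : C a b = 0 := hKiso v z₀
    have hba' : C b a = 0 := hKiso z₀ v
    have caa : C a a = 0 := by rw [hadef]; exact hKiso v v
    have cbb : C b b = 0 := by rw [hbdef]; exact hKiso z₀ z₀
    clear_value a b
    obtain ⟨c, hca, hcb, hgc⟩ := exists_c C g hadd hsymm hnd hdim a b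
    have hac : C a c = 0 := (hsymm a c).trans hca
    have hbc : C b c = 0 := (hsymm b c).trans hcb
    -- g-values of generators
    have val0 : (((0 : ZMod 2).val : ZMod 4)) = 0 := by decide
    have gac : g (a + c) = 2 := by rw [hadd a c, ga, hgc, hac, val0]; decide
    have gbc : g (b + c) = 2 := by rw [hadd b c, gb, hgc, hbc, val0]; decide
    have gabc : g (a + b + c) = 2 := by
      have gab : g (a + b) = 0 := by rw [hadd a b, ga, gb, hab', val0]; decide
      have habc : C (a + b) c = 0 := by rw [map_add, LinearMap.add_apply, hac, hbc, add_zero]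
      rw [hadd (a+b) c, gab, hgc, habc, val0]; decide
    set S := TmapEnd C (a+c) * (TmapEnd C (b+c) * (TmapEnd C (a+b+c) * TmapEnd C c)) with hSdef
    have hSapp : ∀ x : E, S x = x + C x b • a + C x a • b :=
      quadS_apply C g hadd a b c ga gb hgc hab' hba' hac hca hbc hcb
    have hSmem : S ∈ Submonoid.closure Gen := by
      apply Submonoid.mul_mem
      · exact Submonoid.subset_closure ⟨a + c, gac, rfl⟩
      apply Submonoid.mul_mem
      · exact Submonoid.subset_closure ⟨b + c, gbc, rfl⟩
      apply Submonoid.mul_mem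
      · exact Submonoid.subset_closure ⟨a + b + c, gabc, rfl⟩
      · exact Submonoid.subset_closure ⟨c, hgc, rfl⟩
    have hSS : S * S = 1 := by
      ext x
      rw [Module.End.mul_apply, Module.End.one_apply, hSapp, hSapp]
      have hCb : C (x + C x b • a + C x a • b) b = C x b := by
        rw [map_add, map_add, LinearMap.add_apply, LinearMap.add_apply,
          LinearMap.map_smul, LinearMap.map_smul, LinearMap.smul_apply, LinearMap.smul_apply,
          hab', cbb, smul_zero, smul_zero, add_zero, add_zero]
      have hCa : C (x + C x b • a + C x a • b) a = C x a := by
        rw [map_add, map_add, LinearMap.add_apply, LinearMap.add_apply,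
          LinearMap.map_smul, LinearMap.map_smul, LinearMap.smul_apply, LinearMap.smul_apply,
          caa, hba', smul_zero, smul_zero, add_zero, add_zero]
      rw [hCa, hCb]
      abel_nf
      simp [nsmul2, zsmul2, nsmul4, zsmul4]
    refine ⟨S, hSmem, hSS, v, hv, ?_, ?_⟩
    · rw [hSapp, hub, hCva, one_smul, zero_smul, add_zero, hva]
    · intro f hf
      have hCfb : C f b = 0 := by
        rw [hbdef, map_add]
        have : C f (T z₀) = C f z₀ := by
          conv_lhs => rw [← hf]
          exact O_C C g hadd hT f z₀
        rw [this, z2add]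
      have hCfa : C f a = 0 := by
        rw [hadef, map_add]
        have : C f (T v) = C f v := by
          conv_lhs => rw [← hf]
          exact O_C C g hadd hT f v
        rw [this, z2add]
      rw [hSapp, hCfa, hCfb, zero_smul, zero_smul, add_zero, add_zero]

lemma closure_in_O {S : Module.End (ZMod 2) E}
    (hS : S ∈ Submonoid.closure {T : Module.End (ZMod 2) E | ∃ a : E, g a = 2 ∧ T = TmapEnd C a})
    (x : E) : g (S x) = g x := by
  induction hS using Submonoid.closure_induction generalizing x with
  | mem T hT =>
    obtain ⟨a, ha, rfl⟩ := hT
    exact Tmap_mem_O C g hadd ha x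
  | one => rw [Module.End.one_apply]
  | mul T₁ T₂ h₁ h₂ ih₁ ih₂ =>
    rw [Module.End.mul_apply, ih₁, ih₂]

lemma main_ind (hsymm : ∀ x y : E, C x y = C y x)
    (hnd : ∀ x : E, (∀ y : E, C x y = 0) → x = 0)
    (hdim : 9 ≤ finrank (ZMod 2) E) :
    ∀ (m : ℕ) (T : Module.End (ZMod 2) E), (∀ x, g (T x) = g x) →
      finrank (ZMod 2) (LinearMap.range (T - 1)) ≤ m →
      T ∈ Submonoid.closure {T : Module.End (ZMod 2) E | ∃ a : E, g a = 2 ∧ T = TmapEnd C a} := by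
  intro m
  induction m using Nat.strong_induction_on with
  | _ m IH =>
    intro T hT hrk
    by_cases hTne : T = 1
    · rw [hTne]; exact Submonoid.one_mem _
    · obtain ⟨S, hSmem, hSS, v, hv, hSv, hSfix⟩ := step C g hadd hsymm hnd hdim hT hTne
      have hST : ∀ x, g ((S * T) x) = g x := by
        intro x
        rw [Module.End.mul_apply, closure_in_O C g hadd hSmem, hT]
      have hker : LinearMap.ker (T - 1) < LinearMap.ker (S * T - 1) := by
        rw [SetLike.lt_iff_le_and_exists]
        constructor
        · intro f hf
          rw [LinearMap.mem_ker, LinearMap.sub_apply, Module.End.one_apply, sub_eq_zero] at hf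
          rw [LinearMap.mem_ker, LinearMap.sub_apply, Module.End.one_apply, sub_eq_zero,
            Module.End.mul_apply, hf]
          exact hSfix f hf
        · refine ⟨v, ?_, ?_⟩
          · rw [LinearMap.mem_ker, LinearMap.sub_apply, Module.End.one_apply, sub_eq_zero,
              Module.End.mul_apply]
            exact hSv
          · rw [LinearMap.mem_ker, LinearMap.sub_apply, Module.End.one_apply, sub_eq_zero]
            exact hv
      have hkerrk := Submodule.finrank_lt_finrank_of_lt hker
      have r1 := LinearMap.finrank_range_add_finrank_ker (T - 1)
      have r2 := LinearMap.finrank_range_add_finrank_ker (S * T - 1)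
      have hlt : finrank (ZMod 2) (LinearMap.range (S * T - 1)) < m := by omega
      have hSTmem := IH _ hlt (S * T) hST le_rfl
      have hTeq : T = S * (S * T) := by rw [← mul_assoc, hSS, one_mul]
      rw [hTeq]
      exact Submonoid.mul_mem _ hSmem hSTmem

end
end
end St9


/-- if `dim E ≥ 9` then `O(E,g)` is generated by the transvections
`T_a` with `g(a) = 2` alone. -/
theorem orthogonal_group_generated_by_Tmap_of_dim_ge_nine
    {E : Type*} [AddCommGroup E] [Module (ZMod 2) E] [FiniteDimensional (ZMod 2) E]
    (C : E →ₗ[ZMod 2] E →ₗ[ZMod 2] ZMod 2) (g : E → ZMod 4)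
    (hsymm : ∀ x y : E, C x y = C y x)
    (hnd : ∀ x : E, (∀ y : E, C x y = 0) → x = 0)
    (hadd : ∀ x y : E, g (x + y) = g x + g y + 2 * ((C x y).val : ZMod 4))
    (hodd : ∃ x : E, g x = 1 ∨ g x = 3)
    (hdim : 9 ≤ Module.finrank (ZMod 2) E) :
    (Submonoid.closure {T | ∃ a : E, g a = 2 ∧ T = TmapEnd C a} :
      Set (Module.End (ZMod 2) E)) =
    {T : Module.End (ZMod 2) E | ∀ x : E, g (T x) = g x} := by

  apply Set.Subset.antisymm
  · intro T hT x
    exact St9.closure_in_O C g hadd hT x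
  · intro T hT
    exact St9.main_ind C g hadd hsymm hnd hdim
      (Module.finrank (ZMod 2) (LinearMap.range (T - 1))) T hT le_rfl
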